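/- Let Φₛ be the general fully symmetric octupolar potential on ℝ³ with parameters α₀,α₁,α₂,α₃,β₁,β₂,β₃,γ₁,γ₂,γ₃ ∈ ℝ: Φₛ(x₁,x₂,x₃) = 6α₀x₁x₂x₃ + α₁x₁³ + α₂x₂³ + α₃x₃³ + 3(β₁x₁x₂² + β₂x₂x₃² + β₃x₃x₁²) + 3(γ₁x₁x₃² + γ₂x₂x₁² + γ₃x₃x₂²), and set Aᵢ = 3(αᵢ + βᵢ + γᵢ) for i = 1,2,3. Consider the tetrahedral points p₁ = (0,0,1), p₂ = (0, 2√2/3, −1/3), p₃ = (−√(2/3), −√2/3, −1/3), p₄ = (√(2/3), −√2/3, −1/3) on the unit sphere. Then all four points p₁,…,p₄ are critical points of Φₛ restricted to S² (i.e., ∇Φₛ(pᵢ) is a scalar multiple of pᵢ for each i) if and only if α₀ = √2·β₁, α₁ = 3β₁, β₂ = 0, A₁ = 12β₁, A₂ = 2α₂ + (1/√2)α₃ + 3√2·β₃, and A₃ = −√2·α₂ + (5/2)α₃ + 3β₃. -/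

import Mathlib

/-
At a vertex `p` with `p 2 ≠ 0`, the Lagrange condition `∇Φₛ(p) ∥ p` amounts to two equations
which, `∇Φₛ` being linear in the parameters, are linear in `(α, β, γ)`. The north pole gives
`γ₁ = β₂ = 0` and `p₂` gives two more equations. The vertices `p₃, p₄` are exchanged by the
reflection in the first coordinate: their equations have the form `a ± √(2/3) b = 0`, so
together they say `a = b = 0`, four equations with coefficients in `ℚ(√2)`. The resulting
system of eight equations has rank six and is equivalent to the stated one.
-/

/-- The general fully symmetric octupolar potential with its ten parameters. -/
noncomputable def symPot (α₀ α₁ α₂ α₃ β₁ β₂ β₃ γ₁ γ₂ γ₃ : ℝ)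
    (x : EuclideanSpace ℝ (Fin 3)) : ℝ :=
  6 * α₀ * x 0 * x 1 * x 2
    + α₁ * (x 0) ^ 3 + α₂ * (x 1) ^ 3 + α₃ * (x 2) ^ 3
    + 3 * (β₁ * x 0 * (x 1) ^ 2 + β₂ * x 1 * (x 2) ^ 2 + β₃ * x 2 * (x 0) ^ 2)
    + 3 * (γ₁ * x 0 * (x 2) ^ 2 + γ₂ * x 1 * (x 0) ^ 2 + γ₃ * x 2 * (x 1) ^ 2)

/-- The vertices of the regular tetrahedron inscribed in the unit sphere. -/
noncomputable def tetraPt : Fin 4 → EuclideanSpace ℝ (Fin 3)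
  | 0 => (WithLp.equiv 2 (Fin 3 → ℝ)).symm ![0, 0, 1]
  | 1 => (WithLp.equiv 2 (Fin 3 → ℝ)).symm ![0, 2 * Real.sqrt 2 / 3, -(1/3)]
  | 2 => (WithLp.equiv 2 (Fin 3 → ℝ)).symm
      ![-Real.sqrt (2/3), -(Real.sqrt 2 / 3), -(1/3)]
  | 3 => (WithLp.equiv 2 (Fin 3 → ℝ)).symm
      ![Real.sqrt (2/3), -(Real.sqrt 2 / 3), -(1/3)]

/-- The Lagrange condition for `x` to be a critical point of `f` on the sphere of radius `‖x‖`. -/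
def IsSphereCritical {E : Type*} [NormedAddCommGroup E] [InnerProductSpace ℝ E] [CompleteSpace E]
    (f : E → ℝ) (x : E) : Prop :=
  ∃ c : ℝ, gradient f x = c • x

theorem exists_eq_smul_iff_of_apply_ne_zero {𝕜 ι : Type*} [RCLike 𝕜] {v p : EuclideanSpace 𝕜 ι}
    {k : ι} (hk : p k ≠ 0) : (∃ c : 𝕜, v = c • p) ↔ ∀ i, v i * p k = v k * p i := by
  constructor
  · rintro ⟨c, rfl⟩ i
    simp only [PiLp.smul_apply, smul_eq_mul]
    ring
  · intro h
    refine ⟨v k / p k, PiLp.ext fun i => ?_⟩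
    simp only [PiLp.smul_apply, smul_eq_mul]
    field_simp
    exact h i

theorem isSphereCritical_iff_of_apply_two_ne_zero {f : EuclideanSpace ℝ (Fin 3) → ℝ}
    {x : EuclideanSpace ℝ (Fin 3)} (hx : x 2 ≠ 0) :
    IsSphereCritical f x ↔
      gradient f x 0 * x 2 = gradient f x 2 * x 0 ∧
        gradient f x 1 * x 2 = gradient f x 2 * x 1 := by
  rw [IsSphereCritical, exists_eq_smul_iff_of_apply_ne_zero hx]
  simp [Fin.forall_fin_succ]

theorem add_mul_neg_mul_eq_zero_and_add_mul_mul_eq_zero_iff {R : Type*} [CommRing R]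
    [NoZeroDivisors R] [CharZero R] {a b c t : R} (hc : c ≠ 0) (ht : t ≠ 0) :
    (a + c * -t * b = 0 ∧ a + c * t * b = 0) ↔ a = 0 ∧ b = 0 := by
  constructor
  · rintro ⟨hneg, hpos⟩
    have ha : a = 0 := by
      have h2a : 2 * a = 0 := by linear_combination hneg + hpos
      simpa using h2a
    refine ⟨ha, ?_⟩
    have hctb : c * t * b = 0 := by linear_combination hpos - ha
    simpa [hc, ht] using hctb
  · rintro ⟨rfl, rfl⟩
    simp

section symPot

variable {α₀ α₁ α₂ α₃ β₁ β₂ β₃ γ₁ γ₂ γ₃ : ℝ}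

theorem gradient_symPot (x : EuclideanSpace ℝ (Fin 3)) :
    gradient (symPot α₀ α₁ α₂ α₃ β₁ β₂ β₃ γ₁ γ₂ γ₃) x = WithLp.toLp 2
      ![3 * (2 * α₀ * x 1 * x 2 + α₁ * x 0 ^ 2 + β₁ * x 1 ^ 2 + 2 * β₃ * x 0 * x 2
          + γ₁ * x 2 ^ 2 + 2 * γ₂ * x 0 * x 1),
        3 * (2 * α₀ * x 0 * x 2 + α₂ * x 1 ^ 2 + 2 * β₁ * x 0 * x 1 + β₂ * x 2 ^ 2
          + γ₂ * x 0 ^ 2 + 2 * γ₃ * x 1 * x 2),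
        3 * (2 * α₀ * x 0 * x 1 + α₃ * x 2 ^ 2 + 2 * β₂ * x 1 * x 2 + β₃ * x 0 ^ 2
          + 2 * γ₁ * x 0 * x 2 + γ₃ * x 1 ^ 2)] := by
  have hproj (i : Fin 3) :=
    (EuclideanSpace.proj i : EuclideanSpace ℝ (Fin 3) →L[ℝ] ℝ).hasFDerivAt (x := x)
  have h0 := hproj 0
  have h1 := hproj 1
  have h2 := hproj 2
  have hα := ((((h0.const_mul (6 * α₀)).mul h1).mul h2).add ((h0.pow 3).const_mul α₁)).add
    ((h1.pow 3).const_mul α₂) |>.add ((h2.pow 3).const_mul α₃)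
  have hβ := (((h0.const_mul β₁).mul (h1.pow 2)).add ((h1.const_mul β₂).mul (h2.pow 2))).add
    ((h2.const_mul β₃).mul (h0.pow 2))
  have hγ := (((h0.const_mul γ₁).mul (h2.pow 2)).add ((h1.const_mul γ₂).mul (h0.pow 2))).add
    ((h2.const_mul γ₃).mul (h1.pow 2))
  have H := (hα.add (hβ.const_mul 3)).add (hγ.const_mul 3)
  refine (hasGradientAt_iff_hasFDerivAt.mpr (H.congr_fderiv ?_)).gradient
  ext y
  simp only [PiLp.proj_apply, EuclideanSpace.coe_proj, Pi.mul_apply, smul_add,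
    Nat.add_one_sub_one, nsmul_eq_mul, Nat.cast_ofNat, pow_one, add_apply, smul_apply, smul_eq_mul,
    Nat.succ_eq_add_one, Nat.reduceAdd, InnerProductSpace.toDual_apply_apply, PiLp.inner_apply,
    RCLike.inner_apply, Real.ringHom_apply, Fin.sum_univ_three, Matrix.cons_val_zero,
    Matrix.cons_val_one, Matrix.cons_val]
  ring

theorem isSphereCritical_symPot_tetraPt_zero_iff :
    IsSphereCritical (symPot α₀ α₁ α₂ α₃ β₁ β₂ β₃ γ₁ γ₂ γ₃) (tetraPt 0) ↔ γ₁ = 0 ∧ β₂ = 0 := by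
  rw [isSphereCritical_iff_of_apply_two_ne_zero (by simp [tetraPt]), gradient_symPot]
  simp [tetraPt]

theorem isSphereCritical_symPot_tetraPt_one_iff :
    IsSphereCritical (symPot α₀ α₁ α₂ α₃ β₁ β₂ β₃ γ₁ γ₂ γ₃) (tetraPt 1) ↔
      4 * √2 * α₀ = 8 * β₁ + γ₁ ∧ 8 * α₂ - 15 * β₂ + 2 * √2 * α₃ + 12 * √2 * γ₃ = 0 := by
  have hs : √2 ^ 2 = 2 := Real.sq_sqrt zero_le_two
  rw [isSphereCritical_iff_of_apply_two_ne_zero (by simp [tetraPt]), gradient_symPot]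
  simp only [tetraPt, WithLp.equiv_symm_apply, PiLp.toLp_apply, Matrix.cons_val_zero,
    Matrix.cons_val_one, Matrix.cons_val_two, Matrix.head_cons, Matrix.tail_cons]
  constructor
  · rintro ⟨hA, hB⟩
    exact ⟨by linear_combination 9 * hA + 4 * β₁ * hs,
      by linear_combination -9 * hB + (8 * β₂ - 4 * α₂ - 8 * √2 * γ₃) * hs⟩
  · rintro ⟨hA, hB⟩
    exact ⟨by linear_combination hA / 9 - 4 / 9 * β₁ * hs,
      by linear_combination -hB / 9 + (8 / 9 * β₂ - 4 / 9 * α₂ - 8 / 9 * √2 * γ₃) * hs⟩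

theorem isSphereCritical_symPot_iff_of_sq_eq {t : ℝ} (ht : t ^ 2 = 2 / 3) :
    IsSphereCritical (symPot α₀ α₁ α₂ α₃ β₁ β₂ β₃ γ₁ γ₂ γ₃)
        (WithLp.toLp 2 ![t, -(√2 / 3), -(1 / 3)]) ↔
      -10 * √2 * α₀ + 6 * α₁ + 2 * β₁ - 11 * γ₁
          + 3 * t * (α₃ + 4 * β₃ + 2 * √2 * β₂ - 2 * √2 * γ₂ + 2 * γ₃) = 0 ∧
        2 * α₂ - √2 * α₃ - 3 * β₂ - 6 * √2 * β₃ + 6 * γ₂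
          + 6 * t * (α₀ - √2 * β₁ + √2 * γ₁) = 0 := by
  have hs : √2 ^ 2 = 2 := Real.sq_sqrt zero_le_two
  rw [isSphereCritical_iff_of_apply_two_ne_zero (by simp), gradient_symPot]
  simp only [Matrix.cons_val_zero, Matrix.cons_val_one, Matrix.cons_val_two, Matrix.head_cons,
    Matrix.tail_cons]
  constructor
  · rintro ⟨hA, hB⟩
    exact ⟨by linear_combination -9 * hA - (β₁ + 3 * t * γ₃) * hs
        + (18 * γ₁ - 9 * α₁ - 27 * t * β₃ + 18 * √2 * α₀) * ht,
      by linear_combination -9 * hB + (2 * β₂ - α₂ - 6 * t * α₀ + √2 * γ₃) * hs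
        + (9 * √2 * β₃ - 9 * γ₂) * ht⟩
  · rintro ⟨hA, hB⟩
    exact ⟨by linear_combination -hA / 9 - (β₁ / 9 + t * γ₃ / 3) * hs
        + (2 * γ₁ - α₁ - 3 * t * β₃ + 2 * √2 * α₀) * ht,
      by linear_combination -hB / 9 + (2 / 9 * β₂ - α₂ / 9 - 2 / 3 * t * α₀ + √2 * γ₃ / 9) * hs
        + (√2 * β₃ - γ₂) * ht⟩

theorem isSphereCritical_symPot_tetraPt_two_and_three_iff :
    IsSphereCritical (symPot α₀ α₁ α₂ α₃ β₁ β₂ β₃ γ₁ γ₂ γ₃) (tetraPt 2) ∧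
        IsSphereCritical (symPot α₀ α₁ α₂ α₃ β₁ β₂ β₃ γ₁ γ₂ γ₃) (tetraPt 3) ↔
      (-10 * √2 * α₀ + 6 * α₁ + 2 * β₁ - 11 * γ₁ = 0 ∧
          α₃ + 4 * β₃ + 2 * √2 * β₂ - 2 * √2 * γ₂ + 2 * γ₃ = 0) ∧
        2 * α₂ - √2 * α₃ - 3 * β₂ - 6 * √2 * β₃ + 6 * γ₂ = 0 ∧ α₀ - √2 * β₁ + √2 * γ₁ = 0 := by
  have hu : √(2 / 3) ^ 2 = 2 / 3 := Real.sq_sqrt (by norm_num)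
  have hu' : (-√(2 / 3)) ^ 2 = 2 / 3 := by rwa [neg_sq]
  have hu₀ : √(2 / 3) ≠ 0 := by positivity
  rw [tetraPt, tetraPt, WithLp.equiv_symm_apply,
    isSphereCritical_symPot_iff_of_sq_eq hu', isSphereCritical_symPot_iff_of_sq_eq hu,
    and_and_and_comm,
    add_mul_neg_mul_eq_zero_and_add_mul_mul_eq_zero_iff three_ne_zero hu₀,
    add_mul_neg_mul_eq_zero_and_add_mul_mul_eq_zero_iff (by norm_num) hu₀]

theorem symPot_critical_equations_iff :
    ((γ₁ = 0 ∧ β₂ = 0) ∧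
        (4 * √2 * α₀ = 8 * β₁ + γ₁ ∧ 8 * α₂ - 15 * β₂ + 2 * √2 * α₃ + 12 * √2 * γ₃ = 0) ∧
        (-10 * √2 * α₀ + 6 * α₁ + 2 * β₁ - 11 * γ₁ = 0 ∧
          α₃ + 4 * β₃ + 2 * √2 * β₂ - 2 * √2 * γ₂ + 2 * γ₃ = 0) ∧
        2 * α₂ - √2 * α₃ - 3 * β₂ - 6 * √2 * β₃ + 6 * γ₂ = 0 ∧ α₀ - √2 * β₁ + √2 * γ₁ = 0) ↔
      α₀ = √2 * β₁ ∧ α₁ = 3 * β₁ ∧ β₂ = 0 ∧ 3 * (α₁ + β₁ + γ₁) = 12 * β₁ ∧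
        3 * (α₂ + β₂ + γ₂) = 2 * α₂ + (1 / √2) * α₃ + 3 * √2 * β₃ ∧
        3 * (α₃ + β₃ + γ₃) = -√2 * α₂ + (5 / 2) * α₃ + 3 * β₃ := by
  have hs : √2 ^ 2 = 2 := Real.sq_sqrt zero_le_two
  rw [← Real.sqrt_div_self']
  constructor
  · rintro ⟨⟨rfl, rfl⟩, ⟨-, h₁⟩, ⟨h₂, -⟩, h₃, h₄⟩
    exact ⟨by linear_combination h₄,
      by linear_combination h₂ / 6 + 5 / 3 * √2 * h₄ + 5 / 3 * β₁ * hs, rfl,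
      by linear_combination h₂ / 2 + 5 * √2 * h₄ + 5 * β₁ * hs, by linear_combination h₃ / 2,
      by linear_combination √2 / 8 * h₁ - (3 / 2 * γ₃ + α₃ / 4) * hs⟩
  · rintro ⟨h₁, h₂, rfl, h₃, h₄, h₅⟩
    obtain rfl : γ₁ = 0 := by linear_combination h₃ / 3 - h₂
    exact ⟨⟨rfl, rfl⟩, ⟨by linear_combination 4 * √2 * h₁ + 4 * β₁ * hs,
        by linear_combination 4 * √2 * h₅ - 4 * α₂ * hs⟩,
      ⟨by linear_combination -10 * √2 * h₁ + 6 * h₂ - 10 * β₁ * hs,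
        by linear_combination -2 / 3 * √2 * h₄ + 2 / 3 * h₅ - (2 * β₃ + α₃ / 3) * hs⟩,
      by linear_combination 2 * h₄, by linear_combination h₁⟩

end symPot

theorem stmt18 (α₀ α₁ α₂ α₃ β₁ β₂ β₃ γ₁ γ₂ γ₃ : ℝ) :
    (∀ i : Fin 4, ∃ c : ℝ,
        gradient (symPot α₀ α₁ α₂ α₃ β₁ β₂ β₃ γ₁ γ₂ γ₃) (tetraPt i)
          = c • tetraPt i)
      ↔ (α₀ = Real.sqrt 2 * β₁ ∧ α₁ = 3 * β₁ ∧ β₂ = 0 ∧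
          3 * (α₁ + β₁ + γ₁) = 12 * β₁ ∧
          3 * (α₂ + β₂ + γ₂)
            = 2 * α₂ + (1 / Real.sqrt 2) * α₃ + 3 * Real.sqrt 2 * β₃ ∧
          3 * (α₃ + β₃ + γ₃)
            = -(Real.sqrt 2) * α₂ + (5 / 2) * α₃ + 3 * β₃) := by
  rw [← symPot_critical_equations_iff, ← isSphereCritical_symPot_tetraPt_zero_iff,
    ← isSphereCritical_symPot_tetraPt_one_iff, ← isSphereCritical_symPot_tetraPt_two_and_three_iff]
  exact ⟨fun h => ⟨h 0, h 1, h 2, h 3⟩, fun ⟨h₀, h₁, h₂, h₃⟩ i => by fin_cases i <;> assumption⟩
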